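/- Let A be a bounded self-adjoint operator on a separable complex Hilbert space H and let φ ∈ H with φ ≠ 0. For λ ∈ ℝ set A_λ = A + λ⟨·,φ⟩φ and let μ_λ be the spectral measure of φ for A_λ. Then for every Borel set B ⊆ ℝ the function λ ↦ μ_λ(B) is Lebesgue measurable and ∫_ℝ μ_λ(B) dλ = |B|, where |B| denotes the Lebesgue measure of B. (Spectral averaging: the family {μ_λ}_{λ∈ℝ} is a canonical system of measures over (ℝ, Lebesgue).) -/

import Mathlib

open MeasureTheory Complex

noncomputable section

instance : MeasurableSpace Circle := borel Circle
instance : BorelSpace Circle := ⟨rfl⟩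

/-- The normalized arc-length (Haar) measure `m` on the unit circle `𝕋`. -/
def mc : Measure Circle := Measure.haarMeasure (⊤ : TopologicalSpace.PositiveCompacts Circle)

instance : IsProbabilityMeasure mc :=
  ⟨by show (Measure.haarMeasure (⊤ : TopologicalSpace.PositiveCompacts Circle)) Set.univ = 1; simpa using Measure.haarMeasure_self (K₀ := (⊤ : TopologicalSpace.PositiveCompacts Circle))⟩

/-- `F` has nontangential limit `L` at the boundary point `ξ` of the unit disk:
for every `M > 1`, `F z → L` as `z → ξ` within `{z ∈ 𝔻 : |z - ξ| ≤ M (1 - |z|)}`. -/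
def NTLimit (F : ℂ → ℂ) (ξ L : ℂ) : Prop :=
  ∀ M : ℝ, 1 < M →
    Filter.Tendsto F
      (nhdsWithin ξ {z : ℂ | ‖z‖ < 1 ∧ ‖z - ξ‖ ≤ M * (1 - ‖z‖)})
      (nhds L)

/-- `θ` is an inner function on the open unit disk. -/
def IsInner (θ : ℂ → ℂ) : Prop :=
  DifferentiableOn ℂ θ (Metric.ball (0 : ℂ) 1) ∧
  (∀ z ∈ Metric.ball (0 : ℂ) 1, ‖θ z‖ ≤ 1) ∧
  (∀ᵐ (ξ : Circle) ∂mc, ∃ L : ℂ, ‖L‖ = 1 ∧ NTLimit θ (ξ : ℂ) L)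

/-- `θ` is non-constant on the unit disk. -/
def IsNonconstant (θ : ℂ → ℂ) : Prop :=
  ∃ z ∈ Metric.ball (0 : ℂ) 1, ∃ w ∈ Metric.ball (0 : ℂ) 1, θ z ≠ θ w

/-- `μ` is the Clark measure of the inner function `θ` at `α ∈ 𝕋`:
the finite positive Borel measure on `𝕋` whose Poisson integral is `Re ((α + θ)/(α - θ))`. -/
def IsClarkMeasure (θ : ℂ → ℂ) (α : Circle) (μ : Measure Circle) : Prop :=
  IsFiniteMeasure μ ∧ ∀ z ∈ Metric.ball (0 : ℂ) 1,
    ∫ ξ : Circle, (1 - ‖z‖ ^ 2) / ‖(ξ : ℂ) - z‖ ^ 2 ∂μ =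
      (((α : ℂ) + θ z) / ((α : ℂ) - θ z)).re

variable {H : Type*} [NormedAddCommGroup H] [InnerProductSpace ℂ H] [CompleteSpace H]

/-- The rank-one operator `ψ ↦ ⟨ψ, φ⟩ φ` (inner product linear in the first argument,
i.e. `ψ ↦ ⟪φ, ψ⟫_ℂ • φ` in Mathlib's convention). -/
def rankOne (φ : H) : H →L[ℂ] H := (innerSL ℂ φ).smulRight φ

/-- `μ` is the spectral measure of the vector `φ` for the bounded self-adjoint operator `T`:
`⟨(T - z)⁻¹ φ, φ⟩ = ∫ (t - z)⁻¹ dμ(t)` for all non-real `z`. -/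
def IsSpectralMeasureSA (T : H →L[ℂ] H) (φ : H) (μ : Measure ℝ) : Prop :=
  IsFiniteMeasure μ ∧ ∀ z : ℂ, z.im ≠ 0 →
    (inner ℂ φ ((Ring.inverse (T - z • (1 : H →L[ℂ] H))) φ) : ℂ) = ∫ t : ℝ, ((t : ℂ) - z)⁻¹ ∂μ

/-- `ν` is the spectral measure of the vector `φ` for the unitary operator `V`:
`⟨Vⁿ φ, φ⟩ = ∫ ξⁿ dν(ξ)` for all `n ∈ ℤ`. -/
def IsSpectralMeasureU (V : unitary (H →L[ℂ] H)) (φ : H) (ν : Measure Circle) : Prop :=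
  IsFiniteMeasure ν ∧ ∀ n : ℤ,
    (inner ℂ φ (((V ^ n : unitary (H →L[ℂ] H)) : H →L[ℂ] H) φ) : ℂ) =
      ∫ ξ : Circle, (ξ : ℂ) ^ n ∂ν

/-- A bounded operator is pure point if the closed linear span of its eigenvectors
is the whole space. -/
def IsPurePoint (T : H →L[ℂ] H) : Prop :=
  (Submodule.span ℂ {x : H | x ≠ 0 ∧ ∃ c : ℂ, T x = c • x}).topologicalClosure = ⊤

/-- `φ` is a cyclic vector for the bounded (self-adjoint) operator `T`. -/
def IsCyclicSA (T : H →L[ℂ] H) (φ : H) : Prop :=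
  (Submodule.span ℂ (Set.range fun n : ℕ => (T ^ n) φ)).topologicalClosure = ⊤

/-- `φ` is a cyclic vector for the unitary operator `V`. -/
def IsCyclicU (V : unitary (H →L[ℂ] H)) (φ : H) : Prop :=
  (Submodule.span ℂ
    (Set.range fun n : ℤ => ((V ^ n : unitary (H →L[ℂ] H)) : H →L[ℂ] H) φ)).topologicalClosure = ⊤

/-- The unitary rank-one perturbation `U + (α - 1)⟨·, U⁻¹ φ⟩φ`. -/
def uPert (U : H →L[ℂ] H) (φ : H) (α : Circle) : H →L[ℂ] H :=
  U + ((α : ℂ) - 1) • (innerSL ℂ ((Ring.inverse U) φ)).smulRight φ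

/-- The recursively defined chain of unitary rank-one perturbations:
`U_{α,0} = U`, `U_{α,k} = U_{α,k-1} + (α_k - 1)⟨·, (U_{α,k-1})⁻¹ φ_k⟩ φ_k`. -/
def uChain (U : H →L[ℂ] H) {n : ℕ} (φ : Fin n → H) (α : Fin n → Circle) : ℕ → (H →L[ℂ] H)
  | 0 => U
  | (k + 1) => if h : k < n then uPert (uChain U φ α k) (φ ⟨k, h⟩) (α ⟨k, h⟩) else uChain U φ α k

open Set Filter Topology ENNReal

namespace SpecAvg


lemma lintegral_cauchy_kernel {a b : ℝ} (hb : 0 < b) :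
    ∫⁻ lam : ℝ, ENNReal.ofReal (b / ((lam + a) ^ 2 + b ^ 2)) = ENNReal.ofReal Real.pi := by
  have hg : Integrable (fun x : ℝ => (1 + (x / b) ^ 2)⁻¹) :=
    integrable_inv_one_add_sq.comp_div hb.ne'
  have hga : Integrable (fun lam : ℝ => (1 + ((lam + a) / b) ^ 2)⁻¹) := hg.comp_add_right a
  have hint : Integrable (fun lam : ℝ => b / ((lam + a) ^ 2 + b ^ 2)) := by
    refine (hga.const_mul b⁻¹).congr (ae_of_all _ fun lam => ?_)
    have h1 : (lam + a) ^ 2 + b ^ 2 > 0 := by positivity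
    field_simp
    ring
  rw [← MeasureTheory.ofReal_integral_eq_lintegral_ofReal hint
    (ae_of_all _ fun lam => by positivity)]
  congr 1
  have e1 : ∀ lam : ℝ, b / ((lam + a) ^ 2 + b ^ 2) = b⁻¹ * (1 + ((lam + a) / b) ^ 2)⁻¹ := by
    intro lam
    have h1 : (lam + a) ^ 2 + b ^ 2 > 0 := by positivity
    field_simp
    ring
  simp_rw [e1]
  rw [integral_const_mul]
  rw [MeasureTheory.integral_add_right_eq_self (fun y : ℝ => (1 + (y / b) ^ 2)⁻¹) a]
  rw [MeasureTheory.Measure.integral_comp_div (fun x : ℝ => (1 + x ^ 2)⁻¹) b]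
  rw [integral_univ_inv_one_add_sq]
  rw [abs_of_pos hb, smul_eq_mul]
  field_simp

lemma lintegral_im_frac {u v : ℝ} (hv : 0 < v) :
    ∫⁻ lam : ℝ, ENNReal.ofReal (v / ((1 + lam * u) ^ 2 + (lam * v) ^ 2)) = ENNReal.ofReal Real.pi := by
  have hs : 0 < u ^ 2 + v ^ 2 := by positivity
  have key : ∀ lam : ℝ, v / ((1 + lam * u) ^ 2 + (lam * v) ^ 2) =
      (v / (u ^ 2 + v ^ 2)) / ((lam + u / (u ^ 2 + v ^ 2)) ^ 2 + (v / (u ^ 2 + v ^ 2)) ^ 2) := by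
    intro lam
    have h1 : (0:ℝ) < (1 + lam * u) ^ 2 + (lam * v) ^ 2 := by
      rcases eq_or_ne lam 0 with h | h
      · simp [h]
      · exact add_pos_of_nonneg_of_pos (sq_nonneg _) (by positivity)
    have h2 : (0:ℝ) < (lam + u / (u ^ 2 + v ^ 2)) ^ 2 + (v / (u ^ 2 + v ^ 2)) ^ 2 := by positivity
    rw [div_eq_div_iff h1.ne' h2.ne']
    field_simp
    ring
  simp_rw [key]
  exact lintegral_cauchy_kernel (by positivity)



lemma meas_kernel (x ε : ℝ) : Measurable fun t : ℝ => ENNReal.ofReal (ε / ((t - x) ^ 2 + ε ^ 2)) :=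
  (measurable_const.div (((measurable_id.sub_const x).pow_const 2).add_const _)).ennreal_ofReal

lemma sigmaFinite_of_poisson_fin (ρ : Measure ℝ)
    (hfin : ∀ y : ℝ, ∫⁻ t, ENNReal.ofReal (1 / ((t - y) ^ 2 + 1)) ∂ρ ≠ ⊤) :
    ∀ l u : ℝ, ρ (Ioo l u) < ⊤ := by
  intro l u
  rcases le_or_gt u l with h | h
  · rw [Ioo_eq_empty (not_lt.mpr h)]; simp
  · set c := (l + u) / 2 with hc
    set K := (u - l) ^ 2 + 1 with hK
    have hK0 : (0:ℝ) < K := by positivity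
    have key : ∀ t ∈ Ioo l u,
        (1:ℝ≥0∞) ≤ ENNReal.ofReal K * ENNReal.ofReal (1 / ((t - c) ^ 2 + 1)) := by
      intro t ht
      rw [← ENNReal.ofReal_mul hK0.le, ENNReal.one_le_ofReal, mul_one_div,
        le_div_iff₀ (by positivity)]
      obtain ⟨h1, h2⟩ := ht
      simp only [hc, hK]
      nlinarith [sq_nonneg (t - (l+u)/2), sq_nonneg (u - l)]
    calc ρ (Ioo l u) = ∫⁻ _ in Ioo l u, 1 ∂ρ := by simp
      _ ≤ ∫⁻ t in Ioo l u, ENNReal.ofReal K * ENNReal.ofReal (1 / ((t - c) ^ 2 + 1)) ∂ρ :=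
          setLIntegral_mono (measurable_const.mul (by simpa only [one_pow] using meas_kernel c 1)) key
      _ ≤ ∫⁻ t, ENNReal.ofReal K * ENNReal.ofReal (1 / ((t - c) ^ 2 + 1)) ∂ρ :=
          setLIntegral_le_lintegral _ _
      _ = ENNReal.ofReal K * ∫⁻ t, ENNReal.ofReal (1 / ((t - c) ^ 2 + 1)) ∂ρ :=
          lintegral_const_mul' _ _ ENNReal.ofReal_ne_top
      _ < ⊤ := ENNReal.mul_lt_top ENNReal.ofReal_lt_top (lt_top_iff_ne_top.mpr (hfin c))

/-- Stieltjes inversion for atoms -/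
lemma tendsto_atom (ρ : Measure ℝ) (x : ℝ)
    (hfin : ∫⁻ t, ENNReal.ofReal (1 / ((t - x) ^ 2 + 1)) ∂ρ ≠ ⊤) :
    Tendsto (fun ε : ℝ => ENNReal.ofReal ε * ∫⁻ t, ENNReal.ofReal (ε / ((t - x) ^ 2 + ε ^ 2)) ∂ρ)
      (𝓝[>] 0) (𝓝 (ρ {x})) := by
  have hmeas : ∀ ε : ℝ, Measurable fun t : ℝ => ENNReal.ofReal (ε ^ 2 / ((t - x) ^ 2 + ε ^ 2)) :=
    fun ε => (measurable_const.div (((measurable_id.sub_const x).pow_const 2).add_const _)).ennreal_ofReal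
  have heq : ∀ᶠ ε in 𝓝[>] (0:ℝ),
      ∫⁻ t, ENNReal.ofReal (ε ^ 2 / ((t - x) ^ 2 + ε ^ 2)) ∂ρ =
      ENNReal.ofReal ε * ∫⁻ t, ENNReal.ofReal (ε / ((t - x) ^ 2 + ε ^ 2)) ∂ρ := by
    filter_upwards [self_mem_nhdsWithin] with ε (hε : 0 < ε)
    rw [← lintegral_const_mul _ (meas_kernel x ε)]
    congr 1; funext t
    rw [← ENNReal.ofReal_mul hε.le]
    congr 1; rw [sq]; ring
  have hmain : Tendsto (fun ε : ℝ => ∫⁻ t, ENNReal.ofReal (ε ^ 2 / ((t - x) ^ 2 + ε ^ 2)) ∂ρ)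
      (𝓝[>] 0) (𝓝 (∫⁻ t, ({x} : Set ℝ).indicator (fun _ => (1:ℝ≥0∞)) t ∂ρ)) := by
    refine tendsto_lintegral_filter_of_dominated_convergence
      (fun t => ENNReal.ofReal (2 / ((t - x) ^ 2 + 1))) (.of_forall fun ε => hmeas ε) ?_ ?_ ?_
    · filter_upwards [Ioc_mem_nhdsGT_of_mem ⟨le_refl (0:ℝ), zero_lt_one⟩] with ε hε
      refine ae_of_all _ fun t => ENNReal.ofReal_le_ofReal ?_
      obtain ⟨hε0, hε1⟩ := hε
      rw [div_le_div_iff₀ (by positivity) (by positivity)]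
      nlinarith [mul_nonneg (sub_nonneg.mpr (show ε ^ 2 ≤ 1 by nlinarith)) (sq_nonneg (t - x)), sq_nonneg ε]
    · have e2 : ∀ t : ℝ, ENNReal.ofReal (2 / ((t - x) ^ 2 + 1)) =
          ENNReal.ofReal 2 * ENNReal.ofReal (1 / ((t - x) ^ 2 + 1)) := by
        intro t
        rw [← ENNReal.ofReal_mul (by norm_num), mul_one_div]
      simp_rw [e2]
      rw [lintegral_const_mul' _ _ ENNReal.ofReal_ne_top]
      exact ENNReal.mul_ne_top ENNReal.ofReal_ne_top hfin
    · refine ae_of_all _ fun t => ?_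
      by_cases ht : t = x
      · subst ht
        have : ∀ᶠ ε in 𝓝[>] (0:ℝ),
            ENNReal.ofReal (ε ^ 2 / ((t - t) ^ 2 + ε ^ 2)) = 1 := by
          filter_upwards [self_mem_nhdsWithin] with ε (hε : 0 < ε)
          rw [sub_self]
          norm_num [div_self (by positivity : ε^2 ≠ (0:ℝ))]
        rw [show ({t} : Set ℝ).indicator (fun _ => (1:ℝ≥0∞)) t = 1 by simp]
        exact Tendsto.congr' (by filter_upwards [this] with ε h using h.symm) tendsto_const_nhds
      · have hD : ((t - x) ^ 2 + (0:ℝ) ^ 2) ≠ 0 := by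
          have : t - x ≠ 0 := sub_ne_zero.mpr ht
          positivity
        have hcont : ContinuousAt (fun ε : ℝ => ε ^ 2 / ((t - x) ^ 2 + ε ^ 2)) 0 :=
          ((continuous_pow 2).continuousAt).div
            ((continuous_const.add (continuous_pow 2)).continuousAt) hD
        have h0 : (fun ε : ℝ => ε ^ 2 / ((t - x) ^ 2 + ε ^ 2)) 0 = 0 := by simp
        have : Tendsto (fun ε : ℝ => ENNReal.ofReal (ε ^ 2 / ((t - x) ^ 2 + ε ^ 2)))
            (𝓝[>] (0:ℝ)) (𝓝 (ENNReal.ofReal ((fun ε : ℝ => ε ^ 2 / ((t - x) ^ 2 + ε ^ 2)) 0))) :=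
          (ENNReal.continuous_ofReal.continuousAt.tendsto).comp
            (hcont.tendsto.mono_left (nhdsWithin_le_nhds (s := Ioi (0:ℝ))))
        rw [h0] at this
        simpa [indicator_of_notMem (by simpa using ht : t ∉ ({x} : Set ℝ))] using this
  rw [lintegral_indicator (measurableSet_singleton x)] at hmain
  simp only [lintegral_one, Measure.restrict_apply_univ] at hmain
  exact hmain.congr' heq




/-- FTC: interval integral of the Poisson kernel -/
lemma kernel_integral (a b t : ℝ) (hε : 0 < ε) :
    ∫ x in a..b, ε / ((t - x) ^ 2 + ε ^ 2) =
      Real.arctan ((b - t) / ε) - Real.arctan ((a - t) / ε) := by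
  have hderiv : ∀ x ∈ uIcc a b, HasDerivAt (fun y : ℝ => Real.arctan ((y - t) / ε))
      (ε / ((t - x) ^ 2 + ε ^ 2)) x := by
    intro x _
    have h1 : HasDerivAt (fun y : ℝ => (y - t) / ε) (1 / ε) x := by
      simpa using ((hasDerivAt_id x).sub_const t).div_const ε
    have h2 := (Real.hasDerivAt_arctan ((x - t) / ε)).comp x h1
    refine h2.congr_deriv ?_
    have h3 : (0:ℝ) < (t - x) ^ 2 + ε ^ 2 := by positivity
    field_simp
    ring
  have hcont : Continuous fun x : ℝ => ε / ((t - x) ^ 2 + ε ^ 2) := by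
    refine continuous_const.div (by fun_prop) fun x => ?_
    positivity
  exact intervalIntegral.integral_eq_sub_of_hasDerivAt hderiv (hcont.intervalIntegrable a b)

lemma kernel_lintegral_Ioo {a b : ℝ} (t : ℝ) (hab : a ≤ b) (hε : 0 < ε) :
    ∫⁻ x in Ioo a b, ENNReal.ofReal (ε / ((t - x) ^ 2 + ε ^ 2)) =
      ENNReal.ofReal (Real.arctan ((b - t) / ε) - Real.arctan ((a - t) / ε)) := by
  have hcont : Continuous fun x : ℝ => ε / ((t - x) ^ 2 + ε ^ 2) := by
    refine continuous_const.div (by fun_prop) fun x => ?_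
    positivity
  have hInt : IntegrableOn (fun x : ℝ => ε / ((t - x) ^ 2 + ε ^ 2)) (Ioo a b) :=
    (hcont.integrableOn_Icc).mono_set Ioo_subset_Icc_self
  rw [← ofReal_integral_eq_lintegral_ofReal hInt
      (ae_of_all _ fun x => by positivity)]
  congr 1
  rw [← MeasureTheory.integral_Ioc_eq_integral_Ioo, ← intervalIntegral.integral_of_le hab]
  exact kernel_integral a b t hε

/-- bound on the arctan difference by a fixed integrable profile -/
lemma arctan_diff_bound {a b t ε : ℝ} (hab : a < b) (hε0 : 0 < ε) (hε1 : ε ≤ 1) :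
    Real.arctan ((b - t) / ε) - Real.arctan ((a - t) / ε) ≤
      (Real.pi * (1 + (b - a + 1) ^ 2) + 8 * (b - a)) / ((t - (a + b) / 2) ^ 2 + 1) := by
  set c := (a + b) / 2 with hc
  set d := b - a with hd
  have hd0 : 0 < d := by simp only [hd]; linarith
  set C := Real.pi * (1 + (d + 1) ^ 2) + 8 * d with hC
  have hpi := Real.pi_pos
  rcases le_or_gt ((t - c) ^ 2) ((d + 1) ^ 2) with hnear | hfar
  · -- near: use the π bound
    have h1 : Real.arctan ((b - t) / ε) < Real.pi / 2 := Real.arctan_lt_pi_div_two _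
    have h2 : -(Real.pi / 2) < Real.arctan ((a - t) / ε) := Real.neg_pi_div_two_lt_arctan _
    have hle : Real.arctan ((b - t) / ε) - Real.arctan ((a - t) / ε) ≤ Real.pi := by linarith
    refine hle.trans ?_
    rw [le_div_iff₀ (by positivity)]
    nlinarith
  · -- far: use the kernel integral bound
    have hs1 : (1:ℝ) ≤ (t - c) ^ 2 := by nlinarith
    have hsd : d ≤ |t - c| := by
      nlinarith [abs_nonneg (t - c), _root_.sq_abs (t - c), abs_nonneg (t-c)]
    have hkb : ∀ x ∈ Icc a b, ε / ((t - x) ^ 2 + ε ^ 2) ≤ 4 / (t - c) ^ 2 := by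
      intro x hx
      have h1 : |t - c| / 2 ≤ |t - x| := by
        have : |x - c| ≤ d / 2 := by
          rw [abs_le]
          obtain ⟨hx1, hx2⟩ := hx
          constructor <;> simp only [hc, hd] <;> linarith
        have htri : |t - c| ≤ |t - x| + |x - c| := by
          calc |t - c| = |(t - x) + (x - c)| := by ring_nf
            _ ≤ |t - x| + |x - c| := abs_add_le _ _
        linarith
      have h2 : (t - c) ^ 2 / 4 ≤ (t - x) ^ 2 := by
        calc (t - c) ^ 2 / 4 = (|t - c| / 2) ^ 2 := by
              rw [div_pow, _root_.sq_abs]; norm_num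
          _ ≤ |t - x| ^ 2 := by nlinarith [abs_nonneg (t - c), abs_nonneg (t - x)]
          _ = (t - x) ^ 2 := _root_.sq_abs _
      have h3 : (0:ℝ) < (t - x) ^ 2 := by nlinarith [sq_nonneg (t-c)]
      calc ε / ((t - x) ^ 2 + ε ^ 2) ≤ 1 / (t - x) ^ 2 := by
            gcongr
            nlinarith [sq_nonneg ε]
        _ ≤ 4 / (t - c) ^ 2 := by
            rw [div_le_div_iff₀ h3 (by nlinarith)]
            nlinarith
    have hInt : IntervalIntegrable (fun x : ℝ => ε / ((t - x) ^ 2 + ε ^ 2)) volume a b := by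
      refine Continuous.intervalIntegrable ?_ a b
      refine continuous_const.div (by fun_prop) fun x => ?_
      positivity
    have hmono : ∫ x in a..b, ε / ((t - x) ^ 2 + ε ^ 2) ≤
        ∫ _ in a..b, 4 / (t - c) ^ 2 := by
      refine intervalIntegral.integral_mono_on hab.le hInt intervalIntegrable_const ?_
      intro x hx; exact hkb x hx
    rw [← kernel_integral a b t hε0]
    rw [intervalIntegral.integral_const, smul_eq_mul] at hmono
    refine hmono.trans ?_
    have hcc : (0:ℝ) < (t - c) ^ 2 := by nlinarith
    have e : (b - a) * (4 / (t - c) ^ 2) = 4 * d / (t - c) ^ 2 := by rw [hd]; ring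
    rw [e, div_le_div_iff₀ hcc (by positivity)]
    nlinarith [mul_nonneg (mul_nonneg hpi.le (by positivity : (0:ℝ) ≤ 1 + (d + 1) ^ 2))
        (by nlinarith : (0:ℝ) ≤ (t - c) ^ 2),
      mul_le_mul_of_nonneg_left hs1 (by positivity : (0:ℝ) ≤ 4 * d)]

lemma arctan_tendsto_pos {r : ℝ} (hr : 0 < r) :
    Tendsto (fun ε : ℝ => Real.arctan (r / ε)) (𝓝[>] 0) (𝓝 (Real.pi / 2)) := by
  have h1 : Tendsto (fun ε : ℝ => r / ε) (𝓝[>] (0:ℝ)) atTop := by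
    simpa [div_eq_mul_inv] using tendsto_inv_nhdsGT_zero.const_mul_atTop hr
  exact (tendsto_nhds_of_tendsto_nhdsWithin Real.tendsto_arctan_atTop).comp h1

lemma arctan_tendsto_neg {r : ℝ} (hr : r < 0) :
    Tendsto (fun ε : ℝ => Real.arctan (r / ε)) (𝓝[>] 0) (𝓝 (-(Real.pi / 2))) := by
  have h1 : Tendsto (fun ε : ℝ => r / ε) (𝓝[>] (0:ℝ)) atBot := by
    have h2 : Tendsto (fun ε : ℝ => (-r) / ε) (𝓝[>] (0:ℝ)) atTop := by
      simpa [div_eq_mul_inv] using tendsto_inv_nhdsGT_zero.const_mul_atTop (by linarith : 0 < -r)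
    have h3 := tendsto_neg_atTop_atBot.comp h2
    refine h3.congr fun ε => ?_
    simp [Function.comp, neg_div]
  exact (tendsto_nhds_of_tendsto_nhdsWithin Real.tendsto_arctan_atBot).comp h1

/-- the pointwise limit of the arctan difference -/
lemma arctan_diff_tendsto {a b : ℝ} (hab : a < b) (t : ℝ) :
    Tendsto (fun ε : ℝ =>
        ENNReal.ofReal (Real.arctan ((b - t) / ε) - Real.arctan ((a - t) / ε))) (𝓝[>] 0)
      (𝓝 ((Ioo a b).indicator (fun _ => ENNReal.ofReal Real.pi) t +
        ({a} : Set ℝ).indicator (fun _ => ENNReal.ofReal (Real.pi / 2)) t +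
        ({b} : Set ℝ).indicator (fun _ => ENNReal.ofReal (Real.pi / 2)) t)) := by
  have hcomp : ∀ v : ℝ,
      Tendsto (fun ε : ℝ => Real.arctan ((b - t) / ε) - Real.arctan ((a - t) / ε)) (𝓝[>] 0)
        (𝓝 v) →
      Tendsto (fun ε : ℝ =>
        ENNReal.ofReal (Real.arctan ((b - t) / ε) - Real.arctan ((a - t) / ε))) (𝓝[>] 0)
        (𝓝 (ENNReal.ofReal v)) := fun v h =>
    (ENNReal.continuous_ofReal.continuousAt.tendsto).comp h
  rcases lt_trichotomy t a with hta | hta | hta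
  · have h1 := arctan_tendsto_pos (by linarith : 0 < b - t)
    have h2 := arctan_tendsto_pos (by linarith : 0 < a - t)
    have := hcomp 0 (by simpa using h1.sub h2)
    have hne : t ∉ Ioo a b := fun h => absurd h.1 (by linarith)
    simpa [indicator_of_notMem hne, indicator_of_notMem (by simpa using hta.ne : t ∉ ({a} : Set ℝ)),
      indicator_of_notMem (by simpa using (hta.trans hab).ne : t ∉ ({b} : Set ℝ))] using this
  · subst hta
    have h1 := arctan_tendsto_pos (by linarith : 0 < b - t)
    have h2 : Tendsto (fun ε : ℝ => Real.arctan ((t - t) / ε)) (𝓝[>] (0:ℝ)) (𝓝 0) := by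
      simpa [Real.arctan_zero] using tendsto_const_nhds (α := ℝ) (f := 𝓝[>] (0:ℝ)) (a := (0:ℝ))
    have := hcomp (Real.pi / 2) (by simpa using h1.sub h2)
    simpa [indicator_of_notMem, lt_irrefl, hab.ne] using this
  · rcases lt_trichotomy t b with htb | htb | htb
    · have h1 := arctan_tendsto_pos (by linarith : 0 < b - t)
      have h2 := arctan_tendsto_neg (by linarith : a - t < 0)
      have := hcomp Real.pi (by
        have := h1.sub h2
        simpa [sub_neg_eq_add, add_halves] using this)
      simpa [indicator_of_mem, mem_Ioo, hta, htb, indicator_of_notMem, hta.ne', htb.ne] using this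
    · subst htb
      have h1 : Tendsto (fun ε : ℝ => Real.arctan ((t - t) / ε)) (𝓝[>] (0:ℝ)) (𝓝 0) := by
        simpa [Real.arctan_zero] using tendsto_const_nhds (α := ℝ) (f := 𝓝[>] (0:ℝ)) (a := (0:ℝ))
      have h2 := arctan_tendsto_neg (by linarith : a - t < 0)
      have := hcomp (Real.pi / 2) (by simpa using h1.sub h2)
      simpa [indicator_of_notMem, lt_irrefl, hab.ne'] using this
    · have h1 := arctan_tendsto_neg (by linarith : b - t < 0)
      have h2 := arctan_tendsto_neg (by linarith : a - t < 0)
      have := hcomp 0 (by simpa using h1.sub h2)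
      have hne : t ∉ Ioo a b := fun h => absurd h.2 (by linarith)
      simpa [indicator_of_notMem hne, indicator_of_notMem (by simpa using hta.ne' : t ∉ ({a} : Set ℝ)),
        indicator_of_notMem (by simpa using htb.ne' : t ∉ ({b} : Set ℝ))] using this

/-- Stieltjes inversion for intervals -/
lemma tendsto_interval (ρ : Measure ℝ) [SFinite ρ] {a b : ℝ} (hab : a < b)
    (hfin : ∀ y : ℝ, ∫⁻ t, ENNReal.ofReal (1 / ((t - y) ^ 2 + 1)) ∂ρ ≠ ⊤) :
    Tendsto (fun ε : ℝ => ∫⁻ x in Ioo a b, ∫⁻ t, ENNReal.ofReal (ε / ((t - x) ^ 2 + ε ^ 2)) ∂ρ)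
      (𝓝[>] 0)
      (𝓝 (ENNReal.ofReal Real.pi * ρ (Ioo a b) +
        ENNReal.ofReal (Real.pi / 2) * ρ {a} + ENNReal.ofReal (Real.pi / 2) * ρ {b})) := by
  set c := (a + b) / 2 with hc
  have hmeasF : ∀ ε : ℝ, Measurable fun t : ℝ =>
      ENNReal.ofReal (Real.arctan ((b - t) / ε) - Real.arctan ((a - t) / ε)) := by
    intro ε
    exact ((Real.continuous_arctan.comp (by fun_prop)).sub
      (Real.continuous_arctan.comp (by fun_prop))).measurable.ennreal_ofReal
  have heq : ∀ᶠ ε in 𝓝[>] (0:ℝ),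
      ∫⁻ t, ENNReal.ofReal (Real.arctan ((b - t) / ε) - Real.arctan ((a - t) / ε)) ∂ρ =
      ∫⁻ x in Ioo a b, ∫⁻ t, ENNReal.ofReal (ε / ((t - x) ^ 2 + ε ^ 2)) ∂ρ := by
    filter_upwards [self_mem_nhdsWithin] with ε (hε : 0 < ε)
    have hswap := lintegral_lintegral_swap (μ := (volume : Measure ℝ).restrict (Ioo a b)) (ν := ρ)
      (f := fun x t => ENNReal.ofReal (ε / ((t - x) ^ 2 + ε ^ 2))) ?_
    · rw [hswap]
      congr 1; funext t
      exact (kernel_lintegral_Ioo t hab.le hε).symm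
    · refine Measurable.aemeasurable ?_
      have : Continuous fun p : ℝ × ℝ => ε / ((p.2 - p.1) ^ 2 + ε ^ 2) := by
        refine continuous_const.div (by fun_prop) fun p => ?_
        positivity
      exact this.measurable.ennreal_ofReal
  have hlim : Tendsto (fun ε : ℝ =>
      ∫⁻ t, ENNReal.ofReal (Real.arctan ((b - t) / ε) - Real.arctan ((a - t) / ε)) ∂ρ)
      (𝓝[>] 0)
      (𝓝 (∫⁻ t, ((Ioo a b).indicator (fun _ => ENNReal.ofReal Real.pi) t +
        ({a} : Set ℝ).indicator (fun _ => ENNReal.ofReal (Real.pi / 2)) t +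
        ({b} : Set ℝ).indicator (fun _ => ENNReal.ofReal (Real.pi / 2)) t) ∂ρ)) := by
    set C := Real.pi * (1 + (b - a + 1) ^ 2) + 8 * (b - a) with hC
    have hC0 : 0 ≤ C := by
      have := Real.pi_pos
      nlinarith [sq_nonneg (b - a + 1)]
    refine tendsto_lintegral_filter_of_dominated_convergence
      (fun t => ENNReal.ofReal (C / ((t - c) ^ 2 + 1))) (.of_forall hmeasF) ?_ ?_ ?_
    · filter_upwards [Ioc_mem_nhdsGT_of_mem ⟨le_refl (0:ℝ), zero_lt_one⟩] with ε hε
      exact ae_of_all _ fun t =>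
        ENNReal.ofReal_le_ofReal (arctan_diff_bound hab hε.1 hε.2)
    · have e2 : ∀ t : ℝ, ENNReal.ofReal (C / ((t - c) ^ 2 + 1)) =
          ENNReal.ofReal C * ENNReal.ofReal (1 / ((t - c) ^ 2 + 1)) := by
        intro t
        rw [← ENNReal.ofReal_mul hC0, mul_one_div]
      simp_rw [e2]
      rw [lintegral_const_mul' _ _ ENNReal.ofReal_ne_top]
      exact ENNReal.mul_ne_top ENNReal.ofReal_ne_top (hfin c)
    · exact ae_of_all _ fun t => arctan_diff_tendsto hab t
  have hval : ∫⁻ t, ((Ioo a b).indicator (fun _ => ENNReal.ofReal Real.pi) t +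
      ({a} : Set ℝ).indicator (fun _ => ENNReal.ofReal (Real.pi / 2)) t +
      ({b} : Set ℝ).indicator (fun _ => ENNReal.ofReal (Real.pi / 2)) t) ∂ρ =
      ENNReal.ofReal Real.pi * ρ (Ioo a b) +
        ENNReal.ofReal (Real.pi / 2) * ρ {a} + ENNReal.ofReal (Real.pi / 2) * ρ {b} := by
    rw [lintegral_add_right _ (measurable_const.indicator (measurableSet_singleton b)),
      lintegral_add_right _ (measurable_const.indicator (measurableSet_singleton a))]
    rw [lintegral_indicator_const measurableSet_Ioo,
      lintegral_indicator_const (measurableSet_singleton a),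
      lintegral_indicator_const (measurableSet_singleton b)]
  rw [hval] at hlim
  exact hlim.congr' heq




lemma rankOne_apply (φ ψ : H) : rankOne φ ψ = (inner ℂ φ ψ : ℂ) • φ := rfl

lemma rankOne_isSelfAdjoint (φ : H) : IsSelfAdjoint (rankOne φ) := by
  rw [ContinuousLinearMap.isSelfAdjoint_iff_isSymmetric]
  intro x y
  simp only [ContinuousLinearMap.coe_coe, rankOne_apply, inner_smul_left, inner_smul_right,
    inner_conj_symm]
  ring

lemma selfAdjoint_pert (A : H →L[ℂ] H) (hA : IsSelfAdjoint A) (φ : H) (lam : ℝ) :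
    IsSelfAdjoint (A + (lam : ℂ) • rankOne φ) := by
  refine hA.add ?_
  exact (show IsSelfAdjoint ((lam:ℂ)) by
    simp [isSelfAdjoint_iff, Complex.star_def, Complex.conj_ofReal]).smul
    (rankOne_isSelfAdjoint φ)

lemma isUnit_shift {T : H →L[ℂ] H} (hT : IsSelfAdjoint T) {z : ℂ} (hz : z.im ≠ 0) :
    IsUnit (T - z • (1 : H →L[ℂ] H)) := by
  have h1 : z ∉ spectrum ℂ T := fun h => hz (hT.im_eq_zero_of_mem_spectrum h)
  have h3 := (spectrum.notMem_iff.mp h1).neg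
  rw [neg_sub] at h3
  simpa [Algebra.algebraMap_eq_smul_one] using h3

lemma inverse_apply_eq {T : H →L[ℂ] H} (hT : IsSelfAdjoint T) {z : ℂ} (hz : z.im ≠ 0) (φ : H) :
    (T - z • (1 : H →L[ℂ] H)) ((Ring.inverse (T - z • (1 : H →L[ℂ] H))) φ) = φ := by
  have h := Ring.mul_inverse_cancel _ (isUnit_shift hT hz)
  calc (T - z • (1:H →L[ℂ] H)) ((Ring.inverse (T - z • (1:H →L[ℂ] H))) φ)
      = ((T - z • (1:H →L[ℂ] H)) * Ring.inverse (T - z • (1:H →L[ℂ] H))) φ := rfl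
    _ = φ := by rw [h]; rfl

lemma inner_inverse_im {T : H →L[ℂ] H} (hT : IsSelfAdjoint T) {z : ℂ} (hz : z.im ≠ 0) (φ : H) :
    (inner ℂ φ ((Ring.inverse (T - z • (1 : H →L[ℂ] H))) φ) : ℂ).im
      = z.im * ‖(Ring.inverse (T - z • (1 : H →L[ℂ] H))) φ‖ ^ 2 := by
  set ψ := (Ring.inverse (T - z • (1 : H →L[ℂ] H))) φ with hψ
  have happ : (T - z • (1:H →L[ℂ] H)) ψ = φ := inverse_apply_eq hT hz φ
  have hsym : (inner ℂ (T ψ) ψ : ℂ).im = 0 := by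
    have h := (ContinuousLinearMap.isSelfAdjoint_iff_isSymmetric.mp hT) ψ ψ
    have h2 : (starRingEnd ℂ) (inner ℂ (T ψ) ψ : ℂ) = (inner ℂ (T ψ) ψ : ℂ) := by
      calc (starRingEnd ℂ) (inner ℂ (T ψ) ψ : ℂ) = inner ℂ ψ (T ψ) := by rw [inner_conj_symm]
        _ = (inner ℂ (T ψ) ψ : ℂ) := h.symm
    exact Complex.conj_eq_iff_im.mp h2
  have hins : ((inner ℂ ψ ψ) : ℂ) = ((‖ψ‖ ^ 2 : ℝ) : ℂ) := by
    rw [inner_self_eq_norm_sq_to_K]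
    norm_cast
  calc (inner ℂ φ ψ : ℂ).im = (inner ℂ ((T - z • (1:H →L[ℂ] H)) ψ) ψ : ℂ).im := by rw [happ]
    _ = ((inner ℂ (T ψ) ψ : ℂ) - (starRingEnd ℂ) z * ((‖ψ‖ ^ 2 : ℝ) : ℂ)).im := by
        rw [ContinuousLinearMap.sub_apply, ContinuousLinearMap.smul_apply,
          ContinuousLinearMap.one_apply, inner_sub_left, inner_smul_left, hins]
    _ = z.im * ‖ψ‖ ^ 2 := by
        rw [Complex.sub_im, Complex.mul_im]
        simp only [hsym, Complex.conj_re, Complex.conj_im, Complex.ofReal_re, Complex.ofReal_im]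
        ring

lemma inverse_ne_zero {T : H →L[ℂ] H} (hT : IsSelfAdjoint T) {z : ℂ} (hz : z.im ≠ 0) {φ : H}
    (hφ : φ ≠ 0) : (Ring.inverse (T - z • (1 : H →L[ℂ] H))) φ ≠ 0 := by
  intro h
  apply hφ
  rw [← inverse_apply_eq hT hz φ, h, map_zero]

lemma resolvent_identity (A : H →L[ℂ] H) (hA : IsSelfAdjoint A) (φ : H) (lam : ℝ) {z : ℂ}
    (hz : z.im ≠ 0) :
    (inner ℂ φ ((Ring.inverse (A + (lam:ℂ) • rankOne φ - z • (1:H →L[ℂ] H))) φ) : ℂ) *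
      (1 + (lam:ℂ) * (inner ℂ φ ((Ring.inverse (A - z • (1:H →L[ℂ] H))) φ) : ℂ)) =
      (inner ℂ φ ((Ring.inverse (A - z • (1:H →L[ℂ] H))) φ) : ℂ) := by
  set P := rankOne φ with hPdef
  set T0 := A - z • (1:H →L[ℂ] H) with hT0
  set Tl := A + (lam:ℂ) • P - z • (1:H →L[ℂ] H) with hTl
  have u0 : IsUnit T0 := isUnit_shift hA hz
  have ul : IsUnit Tl := isUnit_shift (selfAdjoint_pert A hA φ lam) hz
  set r0 := Ring.inverse T0 with hr0
  set rl := Ring.inverse Tl with hrl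
  have h1 : rl * Tl = 1 := Ring.inverse_mul_cancel _ ul
  have h2 : T0 * r0 = 1 := Ring.mul_inverse_cancel _ u0
  have key : rl - r0 = rl * (T0 - Tl) * r0 := by
    have e5 : rl * (T0 - Tl) * r0 = rl * T0 * r0 - rl * Tl * r0 := by noncomm_ring
    rw [e5, mul_assoc rl T0 r0, h2, mul_one, h1, one_mul]
  have hTT : T0 - Tl = (-(lam:ℂ)) • P := by
    rw [hT0, hTl, neg_smul]
    abel
  have e2 : rl φ - r0 φ = (rl * ((-(lam:ℂ)) • P) * r0) φ := by
    rw [← ContinuousLinearMap.sub_apply, key, hTT]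
  have e3 : (rl * ((-(lam:ℂ)) • P) * r0) φ = (-(lam:ℂ)) • ((inner ℂ φ (r0 φ) : ℂ) • rl φ) := by
    have e4 : (rl * ((-(lam:ℂ)) • P) * r0) φ = rl ((-(lam:ℂ)) • (P (r0 φ))) := rfl
    rw [e4, hPdef, rankOne_apply, _root_.map_smul, _root_.map_smul]
  have happ : (inner ℂ φ (rl φ) : ℂ) - (inner ℂ φ (r0 φ) : ℂ) =
      (-(lam:ℂ)) * ((inner ℂ φ (r0 φ) : ℂ) * (inner ℂ φ (rl φ) : ℂ)) := by
    rw [← inner_sub_right, e2, e3, inner_smul_right, inner_smul_right]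
  linear_combination happ


lemma den_pos {lam u v : ℝ} (hv : 0 < v) : 0 < (1 + lam * u) ^ 2 + (lam * v) ^ 2 := by
  rcases eq_or_ne lam 0 with h | h
  · simp [h]
  · exact add_pos_of_nonneg_of_pos (sq_nonneg _) (by positivity)

end SpecAvg

/-- Spectral averaging: the family `{μ_λ}_{λ ∈ ℝ}` of spectral measures of the rank-one
perturbations `A_λ = A + λ⟨·,φ⟩φ` is a canonical system of measures over `(ℝ, Lebesgue)`:
for every Borel `B ⊆ ℝ`, `λ ↦ μ_λ(B)` is measurable and `∫_ℝ μ_λ(B) dλ = |B|`. -/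
theorem spectral_averaging {H : Type*} [NormedAddCommGroup H] [InnerProductSpace ℂ H]
    [CompleteSpace H] [TopologicalSpace.SeparableSpace H]
    (A : H →L[ℂ] H) (hA : IsSelfAdjoint A) (φ : H) (hφ : φ ≠ 0)
    (μ : ℝ → Measure ℝ)
    (hμ : ∀ lam : ℝ, IsSpectralMeasureSA (A + (lam : ℂ) • rankOne φ) φ (μ lam)) :
    ∀ B : Set ℝ, MeasurableSet B →
      Measurable (fun lam : ℝ => μ lam B) ∧
      ∫⁻ lam : ℝ, μ lam B ∂(volume : Measure ℝ) = volume B := by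
  classical
  have hA0 : A + ((0:ℝ):ℂ) • rankOne φ = A := by simp
  have hsa : ∀ lam : ℝ, IsSelfAdjoint (A + (lam:ℂ) • rankOne φ) :=
    SpecAvg.selfAdjoint_pert A hA φ
  haveI hfinite : ∀ lam : ℝ, IsFiniteMeasure (μ lam) := fun lam => (hμ lam).1
  set F : ℝ → ℂ → ℂ := fun lam w =>
    (inner ℂ φ ((Ring.inverse (A + (lam:ℂ) • rankOne φ - w • (1:H →L[ℂ] H))) φ) : ℂ) with hF
  have him : ∀ x ε : ℝ, ((x:ℂ) + (ε:ℂ) * I).im = ε := by intro x ε; simp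
  have hFeq : ∀ (lam : ℝ) (w : ℂ), w.im ≠ 0 → F lam w = ∫ t : ℝ, ((t:ℂ) - w)⁻¹ ∂(μ lam) :=
    fun lam w hw => (hμ lam).2 w hw
  have hIm0pos : ∀ w : ℂ, 0 < w.im → 0 < (F 0 w).im := by
    intro w hw
    rw [hF]
    have h1 := SpecAvg.inner_inverse_im (hsa 0) (ne_of_gt hw) φ
    rw [h1]
    have h2 := SpecAvg.inverse_ne_zero (hsa 0) (ne_of_gt hw) (φ := φ) hφ
    have h3 : 0 < ‖(Ring.inverse (A + ((0:ℝ):ℂ) • rankOne φ - w • (1:H →L[ℂ] H))) φ‖ :=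
      norm_pos_iff.mpr h2
    positivity
  have hResolv : ∀ (lam : ℝ) (w : ℂ), w.im ≠ 0 → F lam w * (1 + lam * F 0 w) = F 0 w := by
    intro lam w hw
    have h := SpecAvg.resolvent_identity A hA φ lam hw
    simp only [hF, Complex.ofReal_zero, zero_smul, add_zero]
    simp only [hA0, Complex.ofReal_zero, zero_smul, add_zero] at *
    exact h
  have hImF : ∀ (lam : ℝ) (w : ℂ), 0 < w.im →
      (F lam w).im = (F 0 w).im /
        ((1 + lam * (F 0 w).re) ^ 2 + (lam * (F 0 w).im) ^ 2) := by
    intro lam w hw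
    have hv := hIm0pos w hw
    have hden : (1:ℂ) + (lam:ℂ) * F 0 w ≠ 0 := by
      intro h
      have him' := congrArg Complex.im h
      have hre' := congrArg Complex.re h
      simp only [Complex.add_im, Complex.one_im, Complex.mul_im, Complex.ofReal_re,
        Complex.ofReal_im, Complex.zero_im, zero_mul, add_zero, zero_add] at him'
      simp only [Complex.add_re, Complex.one_re, Complex.mul_re, Complex.ofReal_re,
        Complex.ofReal_im, Complex.zero_re, zero_mul, sub_zero] at hre'
      rcases mul_eq_zero.mp him' with h0 | h0
      · rw [h0] at hre'; simp at hre'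
      · linarith
    have hFl : F lam w = F 0 w / (1 + lam * F 0 w) :=
      (eq_div_iff hden).mpr (hResolv lam w (ne_of_gt hw))
    have hre : ((1:ℂ) + (lam:ℂ) * F 0 w).re = 1 + lam * (F 0 w).re := by
      simp [Complex.add_re, Complex.mul_re]
    have him2 : ((1:ℂ) + (lam:ℂ) * F 0 w).im = lam * (F 0 w).im := by
      simp [Complex.add_im, Complex.mul_im]
    have hN := Complex.normSq_pos.mpr hden
    rw [hFl, Complex.div_im, Complex.normSq_apply, hre, him2]
    rw [Complex.normSq_apply, hre, him2] at hN
    have hd2 := SpecAvg.den_pos (lam := lam) (u := (F 0 w).re) hv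
    field_simp
    ring
  have hK2 : ∀ (lam x ε : ℝ), 0 < ε →
      ∫⁻ t, ENNReal.ofReal (ε / ((t - x) ^ 2 + ε ^ 2)) ∂(μ lam) =
        ENNReal.ofReal ((F lam ((x:ℂ) + (ε:ℂ) * I)).im) := by
    intro lam x ε hε
    set w := (x:ℂ) + (ε:ℂ) * I with hw
    have hwim : w.im = ε := him x ε
    have hwre : w.re = x := by simp [hw]
    have hwne : ∀ t : ℝ, ((t:ℂ) - w) ≠ 0 := by
      intro t h
      have h2 := congrArg Complex.im h
      rw [Complex.sub_im, Complex.ofReal_im, hwim, Complex.zero_im] at h2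
      linarith
    have hcont : Continuous fun t : ℝ => ((t:ℂ) - w)⁻¹ :=
      (Complex.continuous_ofReal.sub continuous_const).inv₀ hwne
    have hbd : ∀ t : ℝ, ‖((t:ℂ) - w)⁻¹‖ ≤ ε⁻¹ := by
      intro t
      rw [norm_inv]
      have h1 : ε ≤ ‖(t:ℂ) - w‖ := by
        have h2 := Complex.abs_im_le_norm ((t:ℂ) - w)
        rw [Complex.sub_im, Complex.ofReal_im, hwim, zero_sub, abs_neg, abs_of_pos hε] at h2
        exact h2
      exact inv_anti₀ hε h1
    have hint : Integrable (fun t : ℝ => ((t:ℂ) - w)⁻¹) (μ lam) :=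
      Integrable.mono' (integrable_const (ε⁻¹)) hcont.aestronglyMeasurable (ae_of_all _ hbd)
    have hptw : ∀ t : ℝ, (((t:ℂ) - w)⁻¹).im = ε / ((t - x) ^ 2 + ε ^ 2) := by
      intro t
      rw [Complex.inv_im, Complex.normSq_apply, Complex.sub_re, Complex.sub_im,
        Complex.ofReal_re, Complex.ofReal_im, hwim, hwre, zero_sub, neg_neg]
      congr 1
      ring
    have hptw' : ∀ t : ℝ, RCLike.im (((t:ℂ) - w)⁻¹) = ε / ((t - x) ^ 2 + ε ^ 2) := hptw
    calc ∫⁻ t, ENNReal.ofReal (ε / ((t - x) ^ 2 + ε ^ 2)) ∂(μ lam)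
        = ∫⁻ t, ENNReal.ofReal (RCLike.im (((t:ℂ) - w)⁻¹)) ∂(μ lam) := by
          congr 1; funext t; rw [hptw']
      _ = ENNReal.ofReal (∫ t, RCLike.im (((t:ℂ) - w)⁻¹) ∂(μ lam)) :=
          (MeasureTheory.ofReal_integral_eq_lintegral_ofReal hint.im
            (ae_of_all _ fun t => by
              simp only [Pi.zero_apply]
              rw [hptw']
              positivity)).symm
      _ = ENNReal.ofReal (RCLike.im (∫ t, ((t:ℂ) - w)⁻¹ ∂(μ lam))) := by
          rw [integral_im hint]
      _ = ENNReal.ofReal ((∫ t, ((t:ℂ) - w)⁻¹ ∂(μ lam)).im) := rfl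
      _ = ENNReal.ofReal ((F lam w).im) := by
          rw [hFeq lam w (by rw [hwim]; exact hε.ne')]
  have hK3 : ∀ (x ε : ℝ), 0 < ε →
      ∫⁻ lam : ℝ, ENNReal.ofReal ((F lam ((x:ℂ) + (ε:ℂ) * I)).im) = ENNReal.ofReal Real.pi := by
    intro x ε hε
    have hwim : ((x:ℂ) + (ε:ℂ) * I).im = ε := him x ε
    have h1 : ∀ lam : ℝ, ENNReal.ofReal ((F lam ((x:ℂ) + (ε:ℂ) * I)).im) =
        ENNReal.ofReal ((F 0 ((x:ℂ) + (ε:ℂ) * I)).im /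
          ((1 + lam * (F 0 ((x:ℂ) + (ε:ℂ) * I)).re) ^ 2 +
            (lam * (F 0 ((x:ℂ) + (ε:ℂ) * I)).im) ^ 2)) := by
      intro lam
      rw [hImF lam _ (by rw [hwim]; exact hε)]
    simp_rw [h1]
    exact SpecAvg.lintegral_im_frac (hIm0pos _ (by rw [hwim]; exact hε))
  -- continuity of the base resolvent along horizontal lines
  have hF0cont : ∀ ε : ℝ, 0 < ε → Continuous fun x : ℝ => F 0 ((x:ℂ) + (ε:ℂ) * I) := by
    intro ε hε
    have hc1 : Continuous fun x : ℝ =>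
        (A + ((0:ℝ):ℂ) • rankOne φ - ((x:ℂ) + (ε:ℂ) * I) • (1:H →L[ℂ] H)) := by
      refine continuous_const.sub ?_
      exact (Complex.continuous_ofReal.add continuous_const).smul continuous_const
    have hc2 : Continuous fun x : ℝ =>
        Ring.inverse (A + ((0:ℝ):ℂ) • rankOne φ - ((x:ℂ) + (ε:ℂ) * I) • (1:H →L[ℂ] H)) := by
      rw [continuous_iff_continuousAt]
      intro x
      obtain ⟨un, hun⟩ := SpecAvg.isUnit_shift (hsa 0) (z := (x:ℂ) + (ε:ℂ) * I)
        (by rw [him]; exact hε.ne')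
      have h6 : ContinuousAt (Ring.inverse : (H →L[ℂ] H) → (H →L[ℂ] H))
          (A + ((0:ℝ):ℂ) • rankOne φ - ((x:ℂ) + (ε:ℂ) * I) • (1:H →L[ℂ] H)) := by
        rw [← hun]
        exact NormedRing.inverse_continuousAt un
      exact ContinuousAt.comp
        (f := fun x : ℝ => A + ((0:ℝ):ℂ) • rankOne φ - ((x:ℂ) + (ε:ℂ) * I) • (1:H →L[ℂ] H))
        (g := Ring.inverse) h6 hc1.continuousAt
    exact continuous_const.inner (hc2.clm_apply continuous_const)
  -- joint measurability of the imaginary parts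
  have hjoint : ∀ ε : ℝ, 0 < ε →
      Measurable fun p : ℝ × ℝ => ENNReal.ofReal ((F p.1 ((p.2:ℂ) + (ε:ℂ) * I)).im) := by
    intro ε hε
    have h1 : ∀ p : ℝ × ℝ, (F p.1 ((p.2:ℂ) + (ε:ℂ) * I)).im =
        (F 0 ((p.2:ℂ) + (ε:ℂ) * I)).im /
          ((1 + p.1 * (F 0 ((p.2:ℂ) + (ε:ℂ) * I)).re) ^ 2 +
            (p.1 * (F 0 ((p.2:ℂ) + (ε:ℂ) * I)).im) ^ 2) := by
      intro p
      exact hImF p.1 _ (by rw [him]; exact hε)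
    have hu : Continuous fun x : ℝ => (F 0 ((x:ℂ) + (ε:ℂ) * I)).re :=
      Complex.continuous_re.comp (hF0cont ε hε)
    have hv : Continuous fun x : ℝ => (F 0 ((x:ℂ) + (ε:ℂ) * I)).im :=
      Complex.continuous_im.comp (hF0cont ε hε)
    have hc : Continuous fun p : ℝ × ℝ =>
        (F 0 ((p.2:ℂ) + (ε:ℂ) * I)).im /
          ((1 + p.1 * (F 0 ((p.2:ℂ) + (ε:ℂ) * I)).re) ^ 2 +
            (p.1 * (F 0 ((p.2:ℂ) + (ε:ℂ) * I)).im) ^ 2) := by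
      refine Continuous.div (hv.comp continuous_snd) ?_ ?_
      · have hu' : Continuous fun p : ℝ × ℝ => (F 0 ((p.2:ℂ) + (ε:ℂ) * I)).re :=
          hu.comp continuous_snd
        have hv' : Continuous fun p : ℝ × ℝ => (F 0 ((p.2:ℂ) + (ε:ℂ) * I)).im :=
          hv.comp continuous_snd
        exact ((continuous_const.add (continuous_fst.mul hu')).pow 2).add
          ((continuous_fst.mul hv').pow 2)
      · intro p
        exact (SpecAvg.den_pos (hIm0pos _ (by rw [him]; exact hε))).ne'
    simp_rw [h1]
    exact hc.measurable.ennreal_ofReal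
  have hmeasfixed : ∀ x ε : ℝ, 0 < ε →
      Measurable fun lam : ℝ => ENNReal.ofReal ((F lam ((x:ℂ) + (ε:ℂ) * I)).im) := by
    intro x ε hε
    have := (hjoint ε hε).comp (measurable_id.prodMk (measurable_const : Measurable fun _ : ℝ => x))
    exact this
  -- the approximating sequence
  set es : ℕ → ℝ := fun n => 1 / (n + 1) with hes
  have hespos : ∀ n, 0 < es n := fun n => by positivity
  have hseq : Filter.Tendsto es Filter.atTop (nhdsWithin 0 (Set.Ioi 0)) := by
    rw [tendsto_nhdsWithin_iff]
    constructor
    · exact tendsto_one_div_add_atTop_nhds_zero_nat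
    · exact Filter.Eventually.of_forall fun n => hespos n
  -- finiteness of Poisson integrals for the finite measures μ lam
  have hfinμ : ∀ (lam : ℝ) (y : ℝ),
      ∫⁻ t, ENNReal.ofReal (1 / ((t - y) ^ 2 + 1)) ∂(μ lam) ≠ ⊤ := by
    intro lam y
    have h1 : ∀ t : ℝ, ENNReal.ofReal (1 / ((t - y) ^ 2 + 1)) ≤ 1 := by
      intro t
      rw [show (1:ℝ≥0∞) = ENNReal.ofReal 1 by simp]
      refine ENNReal.ofReal_le_ofReal ?_
      rw [div_le_one (by positivity)]
      nlinarith [sq_nonneg (t - y)]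
    have h2 : ∫⁻ t, ENNReal.ofReal (1 / ((t - y) ^ 2 + 1)) ∂(μ lam) ≤ μ lam Set.univ := by
      calc ∫⁻ t, ENNReal.ofReal (1 / ((t - y) ^ 2 + 1)) ∂(μ lam) ≤ ∫⁻ _, 1 ∂(μ lam) :=
            lintegral_mono h1
        _ = μ lam Set.univ := by simp
    exact (lt_of_le_of_lt h2 (measure_lt_top _ _)).ne
  -- measurability of atoms
  have hmeasAtom : ∀ x : ℝ, Measurable fun lam : ℝ => μ lam {x} := by
    intro x
    refine ENNReal.measurable_of_tendsto' (f := fun n lam =>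
        ENNReal.ofReal (es n) * ENNReal.ofReal ((F lam ((x:ℂ) + ((es n):ℂ) * I)).im))
      Filter.atTop (fun n => (hmeasfixed x (es n) (hespos n)).const_mul _) ?_
    rw [tendsto_pi_nhds]
    intro lam
    have h1 := (SpecAvg.tendsto_atom (μ lam) x (hfinμ lam x)).comp hseq
    refine h1.congr fun n => ?_
    simp only [Function.comp_apply]
    rw [hK2 lam x (es n) (hespos n)]
  -- measurability of open intervals
  have hmeasIoo : ∀ a b : ℝ, a < b → Measurable fun lam : ℝ => μ lam (Set.Ioo a b) := by
    intro a b hab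
    have hTlim : ∀ lam : ℝ, Filter.Tendsto (fun n => ∫⁻ x in Set.Ioo a b,
        ENNReal.ofReal ((F lam ((x:ℂ) + ((es n):ℂ) * I)).im)) Filter.atTop
        (nhds (ENNReal.ofReal Real.pi * μ lam (Set.Ioo a b) +
          ENNReal.ofReal (Real.pi / 2) * μ lam {a} +
          ENNReal.ofReal (Real.pi / 2) * μ lam {b})) := by
      intro lam
      have h1 := (SpecAvg.tendsto_interval (μ lam) hab (hfinμ lam)).comp hseq
      refine h1.congr fun n => ?_
      simp only [Function.comp_apply]
      refine lintegral_congr fun x => ?_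
      rw [hK2 lam x (es n) (hespos n)]
    have hGmeas : ∀ n : ℕ, Measurable fun lam : ℝ => ∫⁻ x in Set.Ioo a b,
        ENNReal.ofReal ((F lam ((x:ℂ) + ((es n):ℂ) * I)).im) := by
      intro n
      exact Measurable.lintegral_prod_right' (f := fun p : ℝ × ℝ =>
        ENNReal.ofReal ((F p.1 ((p.2:ℂ) + ((es n):ℂ) * I)).im)) (hjoint (es n) (hespos n))
    have hTmeas : Measurable fun lam : ℝ =>
        ENNReal.ofReal Real.pi * μ lam (Set.Ioo a b) +
          ENNReal.ofReal (Real.pi / 2) * μ lam {a} +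
          ENNReal.ofReal (Real.pi / 2) * μ lam {b} := by
      refine ENNReal.measurable_of_tendsto' Filter.atTop hGmeas ?_
      rw [tendsto_pi_nhds]
      exact hTlim
    have hpine : ENNReal.ofReal Real.pi ≠ 0 := (ENNReal.ofReal_pos.mpr Real.pi_pos).ne'
    have hsolve : ∀ lam : ℝ, μ lam (Set.Ioo a b) =
        ((ENNReal.ofReal Real.pi * μ lam (Set.Ioo a b) +
          ENNReal.ofReal (Real.pi / 2) * μ lam {a} +
          ENNReal.ofReal (Real.pi / 2) * μ lam {b}) -
          ENNReal.ofReal (Real.pi / 2) * μ lam {b} -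
          ENNReal.ofReal (Real.pi / 2) * μ lam {a}) / ENNReal.ofReal Real.pi := by
      intro lam
      rw [ENNReal.add_sub_cancel_right
          (ENNReal.mul_ne_top ENNReal.ofReal_ne_top (measure_ne_top _ _)),
        ENNReal.add_sub_cancel_right
          (ENNReal.mul_ne_top ENNReal.ofReal_ne_top (measure_ne_top _ _))]
      exact (ENNReal.eq_div_iff hpine ENNReal.ofReal_ne_top).mpr rfl
    have : Measurable fun lam : ℝ =>
        ((ENNReal.ofReal Real.pi * μ lam (Set.Ioo a b) +
          ENNReal.ofReal (Real.pi / 2) * μ lam {a} +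
          ENNReal.ofReal (Real.pi / 2) * μ lam {b}) -
          ENNReal.ofReal (Real.pi / 2) * μ lam {b} -
          ENNReal.ofReal (Real.pi / 2) * μ lam {a}) / ENNReal.ofReal Real.pi := by
      refine Measurable.div ?_ measurable_const
      refine Measurable.sub ?_ ((hmeasAtom a).const_mul _)
      exact Measurable.sub hTmeas ((hmeasAtom b).const_mul _)
    simp_rw [← hsolve] at this
    exact this
  -- measurability on the π-system and everything
  have hmeasIoc : ∀ a b : ℝ, a < b → Measurable fun lam : ℝ => μ lam (Set.Ioc a b) := by
    intro a b hab
    have h1 : ∀ lam : ℝ, μ lam (Set.Ioc a b) = μ lam (Set.Ioo a b) + μ lam {b} := by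
      intro lam
      rw [← Set.Ioo_union_right hab, measure_union (by simp) (measurableSet_singleton b)]
    simp_rw [h1]
    exact (hmeasIoo a b hab).add (hmeasAtom b)
  have hmeasUniv : Measurable fun lam : ℝ => μ lam Set.univ := by
    have hsp : ∀ lam : ℝ, μ lam Set.univ = ⨆ n : ℕ, μ lam (Set.Ioc (-(n:ℝ) - 1) ((n:ℝ) + 1)) := by
      intro lam
      rw [← Directed.measure_iUnion]
      · congr 1
        refine (Set.eq_univ_iff_forall.mpr ?_).symm
        intro x
        obtain ⟨n, hn⟩ := exists_nat_gt |x|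
        obtain ⟨h1, h2⟩ := abs_lt.mp hn
        exact Set.mem_iUnion.mpr ⟨n, by simp only [Set.mem_Ioc]; constructor <;> linarith⟩
      · refine Monotone.directed_le fun m n hmn => ?_
        apply Set.Ioc_subset_Ioc <;> · push_cast; linarith [(Nat.cast_le (α := ℝ)).mpr hmn]
    simp_rw [hsp]
    exact Measurable.iSup fun n => hmeasIoc _ _ (by push_cast; linarith [Nat.cast_nonneg (α := ℝ) n])
  have hmeasAll : ∀ B : Set ℝ, MeasurableSet B → Measurable fun lam : ℝ => μ lam B := by
    have hgen : (inferInstance : MeasurableSpace ℝ) =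
        MeasurableSpace.generateFrom { S : Set ℝ | ∃ l u, l < u ∧ Set.Ioc l u = S } :=
      (BorelSpace.measurable_eq (α := ℝ)).trans (borel_eq_generateFrom_Ioc ℝ)
    refine MeasurableSpace.induction_on_inter (C := fun B _ => Measurable fun lam : ℝ => μ lam B)
      hgen ?_ ?_ ?_ ?_ ?_
    · simpa using isPiSystem_Ioc (id : ℝ → ℝ) (id : ℝ → ℝ)
    · simp only [measure_empty]
      exact measurable_const
    · rintro S ⟨l, u, hlu, rfl⟩
      exact hmeasIoc l u hlu
    · intro t ht hmt
      have h1 : ∀ lam : ℝ, μ lam tᶜ = μ lam Set.univ - μ lam t := fun lam =>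
        measure_compl ht (measure_ne_top _ _)
      simp_rw [h1]
      exact hmeasUniv.sub hmt
    · intro f hdisj hfm hC
      have h1 : ∀ lam : ℝ, μ lam (⋃ i, f i) = ∑' i, μ lam (f i) := fun lam =>
        measure_iUnion hdisj hfm
      simp_rw [h1]
      exact Measurable.ennreal_tsum hC
  have hμm : Measurable μ := Measure.measurable_of_measurable_coe μ hmeasAll
  set ν : Measure ℝ := (volume : Measure ℝ).bind μ with hν
  have hνapp : ∀ B : Set ℝ, MeasurableSet B → ν B = ∫⁻ lam, μ lam B := fun B hB =>
    Measure.bind_apply hB hμm.aemeasurable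
  have hνPois : ∀ x ε : ℝ, 0 < ε →
      ∫⁻ t, ENNReal.ofReal (ε / ((t - x) ^ 2 + ε ^ 2)) ∂ν = ENNReal.ofReal Real.pi := by
    intro x ε hε
    rw [hν, Measure.lintegral_bind hμm.aemeasurable (SpecAvg.meas_kernel x ε).aemeasurable]
    rw [lintegral_congr (fun lam => hK2 lam x ε hε)]
    exact hK3 x ε hε
  have hfinν : ∀ y : ℝ, ∫⁻ t, ENNReal.ofReal (1 / ((t - y) ^ 2 + 1)) ∂ν ≠ ⊤ := by
    intro y
    have h1 := hνPois y 1 one_pos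
    simp only [one_pow] at h1
    rw [h1]
    exact ENNReal.ofReal_ne_top
  haveI hsf : SigmaFinite ν := by
    have hIoo := SpecAvg.sigmaFinite_of_poisson_fin ν hfinν
    refine ⟨⟨⟨fun n => Set.Ioo (-(n:ℝ) - 1) ((n:ℝ) + 1), fun _ => trivial,
      fun n => hIoo _ _, ?_⟩⟩⟩
    rw [Set.eq_univ_iff_forall]
    intro x
    obtain ⟨n, hn⟩ := exists_nat_gt |x|
    obtain ⟨h1, h2⟩ := abs_lt.mp hn
    exact Set.mem_iUnion.mpr ⟨n, by simp only [Set.mem_Ioo]; constructor <;> linarith⟩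
  have hνatom : ∀ x : ℝ, ν {x} = 0 := by
    intro x
    have h1 := SpecAvg.tendsto_atom ν x (hfinν x)
    have h4 : Filter.Tendsto (fun ε : ℝ => ENNReal.ofReal ε) (nhdsWithin 0 (Set.Ioi 0))
        (nhds 0) := by
      have := (ENNReal.continuous_ofReal.tendsto 0).mono_left
        (nhdsWithin_le_nhds (s := Set.Ioi (0:ℝ)))
      simpa using this
    have h3 : Filter.Tendsto (fun ε : ℝ => ENNReal.ofReal ε * ENNReal.ofReal Real.pi)
        (nhdsWithin 0 (Set.Ioi 0)) (nhds 0) := by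
      have h5 := ENNReal.Tendsto.mul_const (b := ENNReal.ofReal Real.pi) h4
        (Or.inr ENNReal.ofReal_ne_top)
      simpa using h5
    have h2 : Filter.Tendsto (fun ε : ℝ =>
        ENNReal.ofReal ε * ∫⁻ t, ENNReal.ofReal (ε / ((t - x) ^ 2 + ε ^ 2)) ∂ν)
        (nhdsWithin 0 (Set.Ioi 0)) (nhds 0) := by
      refine Filter.Tendsto.congr' ?_ h3
      filter_upwards [self_mem_nhdsWithin] with ε (hε : 0 < ε)
      rw [hνPois x ε hε]
    exact tendsto_nhds_unique h1 h2
  have hνIoo : ∀ a b : ℝ, a < b → ν (Set.Ioo a b) = ENNReal.ofReal (b - a) := by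
    intro a b hab
    have h1 := SpecAvg.tendsto_interval ν hab hfinν
    have h2 : Filter.Tendsto (fun ε : ℝ => ∫⁻ x in Set.Ioo a b,
        ∫⁻ t, ENNReal.ofReal (ε / ((t - x) ^ 2 + ε ^ 2)) ∂ν) (nhdsWithin 0 (Set.Ioi 0))
        (nhds (ENNReal.ofReal Real.pi * ENNReal.ofReal (b - a))) := by
      refine Filter.Tendsto.congr' ?_ tendsto_const_nhds
      filter_upwards [self_mem_nhdsWithin] with ε (hε : 0 < ε)
      rw [show (∫⁻ x in Set.Ioo a b, ∫⁻ t, ENNReal.ofReal (ε / ((t - x) ^ 2 + ε ^ 2)) ∂ν) =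
          ∫⁻ _ in Set.Ioo a b, ENNReal.ofReal Real.pi from
          lintegral_congr fun x => hνPois x ε hε,
        MeasureTheory.setLIntegral_const, Real.volume_Ioo]
    have h3 := tendsto_nhds_unique h1 h2
    rw [hνatom a, hνatom b, mul_zero, add_zero, add_zero] at h3
    have hpine : ENNReal.ofReal Real.pi ≠ 0 := (ENNReal.ofReal_pos.mpr Real.pi_pos).ne'
    have h4 : ν (Set.Ioo a b) =
        (ENNReal.ofReal Real.pi * ENNReal.ofReal (b - a)) / ENNReal.ofReal Real.pi :=
      (ENNReal.eq_div_iff hpine ENNReal.ofReal_ne_top).mpr h3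
    have h5 : ENNReal.ofReal (b - a) =
        (ENNReal.ofReal Real.pi * ENNReal.ofReal (b - a)) / ENNReal.ofReal Real.pi :=
      (ENNReal.eq_div_iff hpine ENNReal.ofReal_ne_top).mpr rfl
    rw [h4, ← h5]
  have hνIoc : ∀ a b : ℝ, a < b → ν (Set.Ioc a b) = ENNReal.ofReal (b - a) := by
    intro a b hab
    rw [← Set.Ioo_union_right hab, measure_union (by simp) (measurableSet_singleton b),
      hνIoo a b hab, hνatom b, add_zero]
  haveI : IsLocallyFiniteMeasure ν := ⟨fun x => ⟨Set.Ioo (x - 1) (x + 1),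
    Ioo_mem_nhds (by linarith) (by linarith),
    by rw [hνIoo _ _ (by linarith)]; exact ENNReal.ofReal_lt_top⟩⟩
  have hext : ν = (volume : Measure ℝ) := by
    refine MeasureTheory.Measure.ext_of_Ioc ν volume fun a b hab => ?_
    rw [hνIoc a b hab, Real.volume_Ioc]
  intro B hB
  refine ⟨hmeasAll B hB, ?_⟩
  rw [← hνapp B hB, hext]
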